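/- Let X ⊂ ℝ^d be a finite spanning set and θ ∈ ℝ^d, and set κ₀ = max_{x∈X} 1/μ'(xᵀθ). Then min over probability distributions λ on X of max_{x∈X} ‖x‖²_{H_λ(θ)^{-1}} is at most κ₀·d, where H_λ(θ) = Σ_{x∈X} λ(x) μ'(xᵀθ) x xᵀ. -/

import Mathlib

open Matrix

noncomputable def μ (z : ℝ) : ℝ := 1 / (1 + Real.exp (-z))

/-- `H_λ(θ) = ∑_{x ∈ X} λ(x) μ'(xᵀθ) x xᵀ`. -/
noncomputable def Hmat {d : ℕ} (X : Finset (Fin d → ℝ)) (θ : Fin d → ℝ)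
    (w : (Fin d → ℝ) → ℝ) : Matrix (Fin d) (Fin d) ℝ :=
  ∑ x ∈ X, (w x * deriv μ (x ⬝ᵥ θ)) • Matrix.vecMulVec x x

/-!
Maximize `det M(p)`, `M(p) = ∑ₓ pₓ μ'(xᵀθ) x xᵀ`, over the probability simplex on `X`: the
maximum exists by compactness and is positive because `X` spans. At the maximizer `p`, moving
towards the vertex `x` gives `det M((1-t)p + t eₓ) = det M(p) · det (1 + t (M⁻¹ Aₓ - 1))
= det M(p) (1 + t (tr (M⁻¹ Aₓ) - d) + O(t²))` with `Aₓ = μ'(xᵀθ) x xᵀ`, so first-order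
optimality gives `μ'(xᵀθ) ‖x‖²_{M⁻¹} = tr (M⁻¹ Aₓ) ≤ d` (the easy half of Kiefer–Wolfowitz).
Dividing by `μ'(xᵀθ) ≥ 1/κ₀` gives the bound.
-/

open Set Filter Topology

lemma μ_eq_sigmoid : μ = Real.sigmoid := funext fun _ => one_div _

lemma deriv_μ_pos (z : ℝ) : 0 < deriv μ z := by
  rw [μ_eq_sigmoid, Real.deriv_sigmoid]
  exact mul_pos (Real.sigmoid_pos z) (sub_pos.2 (Real.sigmoid_lt_one z))

namespace Matrix

variable {ι n : Type*} [Fintype ι] [Fintype n]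

lemma trace_mul_vecMulVec_self (M : Matrix n n ℝ) (x : n → ℝ) :
    trace (M * vecMulVec x x) = x ⬝ᵥ M *ᵥ x := by
  rw [mul_vecMulVec, trace_vecMulVec, dotProduct_comm]

lemma dotProduct_sum_smul_vecMulVec_mulVec (a : ι → n → ℝ) (c : ι → ℝ) (v : n → ℝ) :
    v ⬝ᵥ (∑ i, c i • vecMulVec (a i) (a i)) *ᵥ v = ∑ i, c i * (a i ⬝ᵥ v) ^ 2 := by
  simp only [sum_mulVec, dotProduct_sum, smul_mulVec, vecMulVec_mulVec, dotProduct_smul,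
    op_smul_eq_smul, smul_eq_mul, dotProduct_comm v (a _)]
  exact Finset.sum_congr rfl fun i _ => by ring

lemma exists_dotProduct_ne_zero_of_span_eq_top {a : ι → n → ℝ}
    (hspan : Submodule.span ℝ (range a) = ⊤) {v : n → ℝ} (hv : v ≠ 0) :
    ∃ i, a i ⬝ᵥ v ≠ 0 := by
  by_contra! h
  have : dotProductBilin ℝ ℝ v = 0 :=
    LinearMap.ext_on_range hspan fun i => by simp [dotProduct_comm v, h]
  exact hv (dotProduct_self_eq_zero.mp (LinearMap.congr_fun this v))

lemma posDef_sum_smul_vecMulVec {a : ι → n → ℝ} {c : ι → ℝ} (hc : ∀ i, 0 < c i)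
    (hspan : Submodule.span ℝ (range a) = ⊤) :
    (∑ i, c i • vecMulVec (a i) (a i)).PosDef := by
  have hpsd : (∑ i, c i • vecMulVec (a i) (a i)).PosSemidef :=
    posSemidef_sum _ fun i _ => by
      simpa using (posSemidef_vecMulVec_self_star (a i)).smul (hc i).le
  refine PosDef.of_dotProduct_mulVec_pos hpsd.isHermitian fun v hv => ?_
  obtain ⟨i, hi⟩ := exists_dotProduct_ne_zero_of_span_eq_top hspan hv
  rw [star_trivial, dotProduct_sum_smul_vecMulVec_mulVec]
  exact Finset.sum_pos' (fun j _ => by have := hc j; positivity)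
    ⟨i, Finset.mem_univ i, mul_pos (hc i) (pow_two_pos_of_ne_zero hi)⟩

variable [DecidableEq n]

lemma trace_nonpos_of_det_one_add_smul_le_one {B : Matrix n n ℝ}
    (h : ∀ᶠ t : ℝ in 𝓝[>] 0, det (1 + t • B) ≤ 1) : trace B ≤ 0 := by
  set q := (det (1 + (Polynomial.X : Polynomial ℝ) • B.map Polynomial.C)).divX.divX
  have hslope : ∀ᶠ t in 𝓝[>] 0, trace B + q.eval t * t ≤ 0 := by
    filter_upwards [h, self_mem_nhdsWithin] with t ht (htpos : 0 < t)
    rw [det_one_add_smul] at ht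
    nlinarith
  have hlim : Tendsto (fun t => trace B + q.eval t * t) (𝓝[>] 0) (𝓝 (trace B)) := by
    have hcont : Continuous fun t => trace B + q.eval t * t := by fun_prop
    simpa using (hcont.tendsto 0).mono_left nhdsWithin_le_nhds
  exact le_of_tendsto hlim hslope

lemma trace_inv_mul_le_card_of_isMaxOn_det {A : ι → Matrix n n ℝ} {p : ι → ℝ}
    (hp : p ∈ stdSimplex ℝ ι)
    (hmax : IsMaxOn (fun q => det (Fintype.linearCombination ℝ A q)) (stdSimplex ℝ ι) p)
    (hpos : 0 < det (Fintype.linearCombination ℝ A p)) (i : ι) :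
    trace ((Fintype.linearCombination ℝ A p)⁻¹ * A i) ≤ Fintype.card n := by
  classical
  set M := Fintype.linearCombination ℝ A p
  have hMinv : M * M⁻¹ = 1 := mul_nonsing_inv M hpos.ne'.isUnit
  suffices trace (M⁻¹ * A i - 1) ≤ 0 by
    rwa [trace_sub, trace_one, sub_nonpos] at this
  refine trace_nonpos_of_det_one_add_smul_le_one ?_
  filter_upwards [Ioo_mem_nhdsGT (zero_lt_one' ℝ)] with t ht
  have hmem : (1 - t) • p + t • Pi.single i 1 ∈ stdSimplex ℝ ι :=
    convex_stdSimplex ℝ ι hp (single_mem_stdSimplex ℝ i) (by linarith [ht.2]) ht.1.le (by ring)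
  have hfactor : Fintype.linearCombination ℝ A ((1 - t) • p + t • Pi.single i 1) =
      M * (1 + t • (M⁻¹ * A i - 1)) := by
    rw [map_add, map_smul, map_smul, Fintype.linearCombination_apply_single, one_smul,
      Matrix.mul_add, Matrix.mul_one, Matrix.mul_smul, Matrix.mul_sub, ← Matrix.mul_assoc, hMinv,
      Matrix.one_mul, Matrix.mul_one, sub_smul, one_smul, smul_sub]
    abel
  have hle : det M * det (1 + t • (M⁻¹ * A i - 1)) ≤ det M := by
    simpa only [hfactor, det_mul] using isMaxOn_iff.1 hmax _ hmem
  nlinarith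

lemma exists_isMaxOn_det_linearCombination [Nonempty ι] (A : ι → Matrix n n ℝ) :
    ∃ p ∈ stdSimplex ℝ ι,
      IsMaxOn (fun q => det (Fintype.linearCombination ℝ A q)) (stdSimplex ℝ ι) p := by
  classical
  exact (isCompact_stdSimplex ℝ ι).exists_isMaxOn
    ⟨_, single_mem_stdSimplex ℝ (Classical.arbitrary ι)⟩
    (LinearMap.continuous_of_finiteDimensional _).matrix_det.continuousOn

theorem exists_mem_stdSimplex_forall_mul_dotProduct_inv_mulVec_le [Nonempty ι]
    {a : ι → n → ℝ} {c : ι → ℝ} (hc : ∀ i, 0 < c i)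
    (hspan : Submodule.span ℝ (range a) = ⊤) :
    ∃ p ∈ stdSimplex ℝ ι, 0 < det (∑ i, (p i * c i) • vecMulVec (a i) (a i)) ∧
      ∀ i, c i * (a i ⬝ᵥ (∑ j, (p j * c j) • vecMulVec (a j) (a j))⁻¹ *ᵥ a i) ≤
        Fintype.card n := by
  set A : ι → Matrix n n ℝ := fun i => c i • vecMulVec (a i) (a i)
  have hA : ∀ p, Fintype.linearCombination ℝ A p =
      ∑ i, (p i * c i) • vecMulVec (a i) (a i) := fun p => by
    simp only [Fintype.linearCombination_apply, A, smul_smul]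
  obtain ⟨p, hp, hmax⟩ := exists_isMaxOn_det_linearCombination A
  have hu : (Fintype.linearCombination ℝ A fun _ => (Fintype.card ι : ℝ)⁻¹).PosDef := by
    rw [hA]
    exact posDef_sum_smul_vecMulVec (fun i => mul_pos (by positivity) (hc i)) hspan
  have hpos : 0 < det (Fintype.linearCombination ℝ A p) :=
    hu.det_pos.trans_le (isMaxOn_iff.1 hmax _ stdSimplex.barycenter.2)
  refine ⟨p, hp, hA p ▸ hpos, fun i => ?_⟩
  have := trace_inv_mul_le_card_of_isMaxOn_det hp hmax hpos i
  rwa [hA, show A i = c i • vecMulVec (a i) (a i) from rfl, Matrix.mul_smul, trace_smul,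
    trace_mul_vecMulVec_self, smul_eq_mul] at this

end Matrix

theorem G_optimal_design_le_kappa_d (d : ℕ) (X : Finset (Fin d → ℝ))
    (hne : X.Nonempty)
    (hspan : Submodule.span ℝ (X : Set (Fin d → ℝ)) = ⊤)
    (θ : Fin d → ℝ) (κ₀ : ℝ)
    (hκ : κ₀ = X.sup' hne (fun x => 1 / deriv μ (x ⬝ᵥ θ))) :
    ∃ w : (Fin d → ℝ) → ℝ, (∀ x ∈ X, 0 ≤ w x) ∧ (∑ x ∈ X, w x) = 1 ∧
      IsUnit (Hmat X θ w).det ∧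
      ∀ x ∈ X, x ⬝ᵥ ((Hmat X θ w)⁻¹ *ᵥ x) ≤ κ₀ * d := by
  have : Nonempty X := hne.to_subtype
  obtain ⟨p, hp, hdet, hbound⟩ :=
    exists_mem_stdSimplex_forall_mul_dotProduct_inv_mulVec_le
      (fun x : X => deriv_μ_pos ((x : Fin d → ℝ) ⬝ᵥ θ)) (by rwa [Subtype.range_coe])
  set w := Function.extend ((↑) : X → Fin d → ℝ) p 0
  have hw : ∀ x : X, w x = p x := Subtype.val_injective.extend_apply p 0
  have hH : Hmat X θ w = ∑ x : X, (p x * deriv μ ((x : Fin d → ℝ) ⬝ᵥ θ)) • vecMulVec x x := by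
    simp only [Hmat, ← Finset.sum_coe_sort X, hw]
  refine ⟨w, fun x hx => hw ⟨x, hx⟩ ▸ hp.1 _, ?_, hH ▸ hdet.ne'.isUnit, fun x hx => ?_⟩
  · simpa only [← Finset.sum_coe_sort X, hw] using hp.2
  have hκx : 1 / deriv μ (x ⬝ᵥ θ) ≤ κ₀ := hκ ▸ X.le_sup' (fun y => 1 / deriv μ (y ⬝ᵥ θ)) hx
  have hx_bound : deriv μ (x ⬝ᵥ θ) * (x ⬝ᵥ _) ≤ d := Fintype.card_fin d ▸ hbound ⟨x, hx⟩
  rw [hH]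
  calc _ ≤ d * (1 / deriv μ (x ⬝ᵥ θ)) := by
        rw [mul_one_div, le_div_iff₀ (deriv_μ_pos _)]
        linarith
    _ ≤ d * κ₀ := by gcongr
    _ = κ₀ * d := mul_comm _ _
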